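/- Let K ≥ 0 and let G : ℝ → ℝ be K-convex. Suppose S ∈ ℝ is a global minimizer of G and s ≤ S satisfies G(s) = K + G(S). Define for each opening inventory level x ∈ ℝ the optimal one-stage cost V(x) := min( G(x), inf_{y ≥ x} (K + G(y)) ), where G(x) is the cost of not ordering and K + G(y) is the cost of ordering up to level y ≥ x. Then V(x) = K + G(S) for every x ≤ s (it is optimal to order up to S), and V(x) = G(x) for every x ≥ s (it is optimal not to order); i.e., the (s, S) policy is optimal for the one-stage problem. -/
import Mathlib


/-- `G` is `K`-convex: for all `y`, `z ≥ 0` and `b > 0`,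
`K + G (y + z) ≥ G y + (z / b) * (G y - G (y - b))`. -/
def KConvex (K : ℝ) (G : ℝ → ℝ) : Prop :=
  ∀ y z b : ℝ, 0 ≤ z → 0 < b → G y + (z / b) * (G y - G (y - b)) ≤ K + G (y + z)

/-- Let `G` be `K`-convex (`K ≥ 0`) with global minimizer `S`, and let
`s ≤ S` satisfy `G s = K + G S`. Define the optimal one-stage cost
`V x = min (G x) (inf_{y ≥ x} (K + G y))`. Then `V x = K + G S` for every `x ≤ s`
(order up to `S`) and `V x = G x` for every `x ≥ s` (do not order): the `(s, S)`
policy is optimal for the one-stage problem. -/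
theorem sS_policy_optimal_one_stage
    (K : ℝ) (hK : 0 ≤ K) (G : ℝ → ℝ) (hG : KConvex K G)
    (S : ℝ) (hS : ∀ y : ℝ, G S ≤ G y)
    (s : ℝ) (hsS : s ≤ S) (hGs : G s = K + G S)
    (V : ℝ → ℝ)
    (hV : ∀ x : ℝ, V x = min (G x) (sInf ((fun y => K + G y) '' Set.Ici x))) :
    (∀ x : ℝ, x ≤ s → V x = K + G S) ∧ (∀ x : ℝ, s ≤ x → V x = G x) := by
  -- Fact A: G x ≥ K + G S for x ≤ s
  have hA : ∀ x : ℝ, x ≤ s → K + G S ≤ G x := by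
    intro x hx
    rcases eq_or_lt_of_le hx with h | h
    · rw [h, hGs]
    · rcases eq_or_lt_of_le hsS with h2 | h2
      · have hK0 : K = 0 := by rw [h2] at hGs; linarith
        rw [hK0]; simpa using hS x
      · have := hG s (S - s) (s - x) (by linarith) (by linarith)
        rw [show s + (S - s) = S by ring, show s - (s - x) = x by ring] at this
        have hc : 0 < (S - s) / (s - x) := div_pos (by linarith) (by linarith)
        nlinarith
  -- Fact B: G x ≤ K + G y for s ≤ x ≤ y
  have hB : ∀ x : ℝ, s ≤ x → ∀ y : ℝ, x ≤ y → G x ≤ K + G y := by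
    intro x hx y hy
    rcases le_or_gt x S with hxS | hxS
    · -- show G x ≤ K + G S, then use G S ≤ G y
      have key : G x ≤ K + G S := by
        rcases eq_or_lt_of_le hx with h | h
        · rw [← h, hGs]
        · rcases eq_or_lt_of_le hxS with h2 | h2
          · rw [h2]; linarith
          · have := hG x (S - x) (x - s) (by linarith) (by linarith)
            rw [show x + (S - x) = S by ring, show x - (x - s) = s by ring] at this
            have hc : 0 < (S - x) / (x - s) := div_pos (by linarith) (by linarith)
            nlinarith [hS x]
      have := hS y; linarith
    · have := hG x (y - x) (x - S) (by linarith) (by linarith)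
      rw [show x + (y - x) = y by ring, show x - (x - S) = S by ring] at this
      have hc : 0 ≤ (y - x) / (x - S) := div_nonneg (by linarith) (by linarith)
      nlinarith [hS x]
  constructor
  · intro x hx
    rw [hV x]
    have hmem : K + G S ∈ (fun y => K + G y) '' Set.Ici x :=
      ⟨S, by simp [Set.mem_Ici]; linarith, rfl⟩
    have hbdd : ∀ z ∈ (fun y => K + G y) '' Set.Ici x, K + G S ≤ z := by
      rintro z ⟨y, _, rfl⟩
      have := hS y; simpa using by linarith
    have hinf : sInf ((fun y => K + G y) '' Set.Ici x) = K + G S :=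
      le_antisymm (csInf_le ⟨K + G S, hbdd⟩ hmem) (le_csInf ⟨_, hmem⟩ hbdd)
    rw [hinf, min_eq_right (hA x hx)]
  · intro x hx
    rw [hV x]
    have hne : ((fun y => K + G y) '' Set.Ici x).Nonempty :=
      ⟨K + G x, x, Set.self_mem_Ici, rfl⟩
    have hle : G x ≤ sInf ((fun y => K + G y) '' Set.Ici x) := by
      apply le_csInf hne
      rintro z ⟨y, hy, rfl⟩
      exact hB x hx y hy
    exact min_eq_left hle
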